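/- Let c be a partial proper edge-coloring of a graph with colors α ≠ β, and let P be a maximal path in the subgraph of edges colored α or β, with endpoint w incident to at least one edge of P. Then exactly one of α, β is missing at w. -/

import Mathlib

open scoped Classical

/-- The spanning subgraph of edges of `G` colored `α` or `β` by `c`. -/
def twoColored {V : Type*} {N : ℕ} (G : SimpleGraph V) (c : Sym2 V → Option (Fin N))
    (α β : Fin N) : SimpleGraph V where
  Adj u w := G.Adj u w ∧ (c s(u, w) = some α ∨ c s(u, w) = some β)
  symm := ⟨fun u w h => ⟨h.1.symm, by rw [Sym2.eq_swap]; exact h.2⟩⟩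
  loopless := ⟨fun u h => G.irrefl h.1⟩

section

variable {V : Type*} {N : ℕ} {G : SimpleGraph V} {c : Sym2 V → Option (Fin N)}

theorem twoColored_comm (α β : Fin N) : twoColored G c α β = twoColored G c β α := by
  ext u v
  exact and_congr_right fun _ => or_comm

theorem not_colored_of_twoColored_neighbor_unique {α β : Fin N} (hαβ : α ≠ β) {w u : V}
    (hu : {v | (twoColored G c α β).Adj w v} = {u}) (hc : c s(w, u) = some α) :
    ∀ v, G.Adj w v → c s(w, v) ≠ some β := by
  intro v hv hcv
  have hvu : v = u := by
    have hv_mem : v ∈ {v | (twoColored G c α β).Adj w v} := ⟨hv, Or.inr hcv⟩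
    rwa [hu] at hv_mem
  subst hvu
  exact hαβ (Option.some_injective _ (hc.symm.trans hcv))

end

theorem stmt_6_general {V : Type*} {N : ℕ} (G : SimpleGraph V)
    (c : Sym2 V → Option (Fin N))
    (α β : Fin N) (hαβ : α ≠ β) (w : V)
    (hend : {u | (twoColored G c α β).Adj w u}.ncard = 1) :
    ((∀ u, G.Adj w u → c s(w, u) ≠ some α) ∧ ¬ (∀ u, G.Adj w u → c s(w, u) ≠ some β)) ∨
    (¬ (∀ u, G.Adj w u → c s(w, u) ≠ some α) ∧ (∀ u, G.Adj w u → c s(w, u) ≠ some β)) := by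
  obtain ⟨u, hu⟩ := Set.ncard_eq_one.mp hend
  have hwu : (twoColored G c α β).Adj w u := (Set.ext_iff.mp hu u).mpr rfl
  obtain ⟨hG, hc | hc⟩ := hwu
  · exact Or.inr ⟨fun h => h u hG hc, not_colored_of_twoColored_neighbor_unique hαβ hu hc⟩
  · rw [twoColored_comm] at hu
    exact Or.inl ⟨not_colored_of_twoColored_neighbor_unique hαβ.symm hu hc, fun h => h u hG hc⟩

/-- If w is an endpoint of a maximal αβ-path incident to at least one
of its edges (i.e. w has exactly one incident edge colored α or β), then exactly
one of α, β is missing at w. -/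
theorem stmt_6 {V : Type*} {N : ℕ} (G : SimpleGraph V)
    (c : Sym2 V → Option (Fin N))
    (hproper : ∀ u v w : V, G.Adj u v → G.Adj u w → v ≠ w →
      ∀ γ, c s(u, v) = some γ → c s(u, w) ≠ some γ)
    (α β : Fin N) (hαβ : α ≠ β) (w : V)
    (hend : {u | (twoColored G c α β).Adj w u}.ncard = 1) :
    ((∀ u, G.Adj w u → c s(w, u) ≠ some α) ∧ ¬ (∀ u, G.Adj w u → c s(w, u) ≠ some β)) ∨
    (¬ (∀ u, G.Adj w u → c s(w, u) ≠ some α) ∧ (∀ u, G.Adj w u → c s(w, u) ≠ some β)) :=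
  stmt_6_general G c α β hαβ w hend
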